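/- arXiv:1605.02212 — 3 statements merged into one kernel-verified Lean document; each statement's English description precedes it below -/
import Mathlib

section
/- Let I be a strongly admissible ideal on ℕ×ℕ. Every double sequence of real numbers that is I-statistically convergent to L is I-statistically pre-Cauchy. -/
open Set

def IsIdeal {α : Type*} (I : Set (Set α)) : Prop :=
  ∅ ∈ I ∧ (∀ A B : Set α, A ∈ I → B ∈ I → A ∪ B ∈ I) ∧
    (∀ A B : Set α, B ⊆ A → A ∈ I → B ∈ I)

def Admissible (I : Set (Set (ℕ × ℕ))) : Prop :=
  IsIdeal I ∧ Set.univ ∉ I ∧ ∀ p : ℕ × ℕ, ({p} : Set (ℕ × ℕ)) ∈ I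

def StronglyAdmissible (I : Set (Set (ℕ × ℕ))) : Prop :=
  IsIdeal I ∧ Set.univ ∉ I ∧
    ∀ i : ℕ, ({i} ×ˢ (Set.univ : Set ℕ)) ∈ I ∧ ((Set.univ : Set ℕ) ×ˢ {i}) ∈ I

/-- `dens A m n = (1/(mn)) |{(j,k) ∈ A : j ≤ m, k ≤ n}|`. -/
noncomputable def dens (A : Set (ℕ × ℕ)) (m n : ℕ) : ℝ :=
  ({jk ∈ A | 1 ≤ jk.1 ∧ jk.1 ≤ m ∧ 1 ≤ jk.2 ∧ jk.2 ≤ n}.ncard : ℝ) / (m * n)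

/-- `dens2 A m n = (1/(m²n²)) |{((j,k),(p,q)) ∈ A : j,p ≤ m, k,q ≤ n}|`. -/
noncomputable def dens2 (A : Set ((ℕ × ℕ) × (ℕ × ℕ))) (m n : ℕ) : ℝ :=
  ({q ∈ A | 1 ≤ q.1.1 ∧ q.1.1 ≤ m ∧ 1 ≤ q.2.1 ∧ q.2.1 ≤ m ∧
      1 ≤ q.1.2 ∧ q.1.2 ≤ n ∧ 1 ≤ q.2.2 ∧ q.2.2 ≤ n}.ncard : ℝ) /
    ((m : ℝ) ^ 2 * (n : ℝ) ^ 2)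

/-- `I`-statistical convergence of a real double sequence. -/
def IStatConv (I : Set (Set (ℕ × ℕ))) (x : ℕ → ℕ → ℝ) (L : ℝ) : Prop :=
  ∀ ε > (0:ℝ), ∀ δ > (0:ℝ),
    {mn : ℕ × ℕ | δ ≤ dens {jk : ℕ × ℕ | ε ≤ |x jk.1 jk.2 - L|} mn.1 mn.2} ∈ I

/-- `I`-statistically pre-Cauchy real double sequences. -/
def IStatPreCauchy (I : Set (Set (ℕ × ℕ))) (x : ℕ → ℕ → ℝ) : Prop :=
  ∀ ε > (0:ℝ), ∀ δ > (0:ℝ),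
    {mn : ℕ × ℕ | δ ≤ dens2
      {q : (ℕ × ℕ) × (ℕ × ℕ) | ε ≤ |x q.1.1 q.1.2 - x q.2.1 q.2.2|} mn.1 mn.2} ∈ I

/-- Convergence of a real double sequence in Pringsheim's sense. -/
def PTendsto (y : ℕ → ℕ → ℝ) (a : ℝ) : Prop :=
  ∀ ε > (0:ℝ), ∃ N : ℕ, ∀ m ≥ N, ∀ n ≥ N, |y m n - a| < ε

/-- `I`-limit of a real double sequence. -/
def ILim (I : Set (Set (ℕ × ℕ))) (y : ℕ → ℕ → ℝ) (L : ℝ) : Prop :=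
  ∀ ε > (0:ℝ), {mn : ℕ × ℕ | ε ≤ |y mn.1 mn.2 - L|} ∈ I

/-- `I`-asymptotic density zero. -/
def IDensZero (I : Set (Set (ℕ × ℕ))) (A : Set (ℕ × ℕ)) : Prop :=
  ILim I (fun m n => dens A m n) 0


lemma my_ncard_sprod {α β : Type*} {s : Set α} {t : Set β} (hs : s.Finite) (ht : t.Finite) :
    (s ×ˢ t).ncard = s.ncard * t.ncard := by
  rw [Set.ncard_eq_toFinset_card _ (hs.prod ht), Set.ncard_eq_toFinset_card _ hs,
    Set.ncard_eq_toFinset_card _ ht]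
  rw [show (hs.prod ht).toFinset = hs.toFinset ×ˢ ht.toFinset
      from (Set.Finite.toFinset_prod hs ht).symm]
  exact Finset.card_product _ _

lemma my_ncard_Icc (m : ℕ) : (Set.Icc 1 m).ncard = m := by
  rw [← Finset.coe_Icc, Set.ncard_coe_finset, Nat.card_Icc]; omega

lemma dens_nonneg (A : Set (ℕ × ℕ)) (m n : ℕ) : 0 ≤ dens A m n := by
  unfold dens
  positivity

lemma key_ineq (x : ℕ → ℕ → ℝ) (L ε : ℝ) (hε : 0 < ε) (m n : ℕ) :
    dens2 {q : (ℕ × ℕ) × (ℕ × ℕ) | ε ≤ |x q.1.1 q.1.2 - x q.2.1 q.2.2|} m n ≤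
      2 * dens {jk : ℕ × ℕ | ε/2 ≤ |x jk.1 jk.2 - L|} m n := by
  set A : Set (ℕ × ℕ) := {jk : ℕ × ℕ | ε/2 ≤ |x jk.1 jk.2 - L|} with hA
  set B : Set (ℕ × ℕ) := Set.Icc 1 m ×ˢ Set.Icc 1 n with hB
  have hBfin : B.Finite := (Set.finite_Icc _ _).prod (Set.finite_Icc _ _)
  have hBcard : B.ncard = m * n := by
    rw [hB, my_ncard_sprod (Set.finite_Icc _ _) (Set.finite_Icc _ _), my_ncard_Icc, my_ncard_Icc]
  set S : Set (ℕ × ℕ) := {jk ∈ A | 1 ≤ jk.1 ∧ jk.1 ≤ m ∧ 1 ≤ jk.2 ∧ jk.2 ≤ n} with hS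
  have hSB : S ⊆ B := by
    rintro ⟨j, k⟩ ⟨-, h1, h2, h3, h4⟩
    exact ⟨⟨h1, h2⟩, ⟨h3, h4⟩⟩
  have hSfin : S.Finite := hBfin.subset hSB
  set T : Set ((ℕ × ℕ) × (ℕ × ℕ)) :=
    {q ∈ {q : (ℕ × ℕ) × (ℕ × ℕ) | ε ≤ |x q.1.1 q.1.2 - x q.2.1 q.2.2|} |
      1 ≤ q.1.1 ∧ q.1.1 ≤ m ∧ 1 ≤ q.2.1 ∧ q.2.1 ≤ m ∧
      1 ≤ q.1.2 ∧ q.1.2 ≤ n ∧ 1 ≤ q.2.2 ∧ q.2.2 ≤ n} with hT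
  have hTsub : T ⊆ (S ×ˢ B) ∪ (B ×ˢ S) := by
    rintro ⟨⟨j, k⟩, ⟨p, q⟩⟩ ⟨hq, c1, c2, c3, c4, c5, c6, c7, c8⟩
    simp only [Set.mem_setOf_eq] at hq
    have hor : ε/2 ≤ |x j k - L| ∨ ε/2 ≤ |x p q - L| := by
      by_contra hcon
      push_neg at hcon
      have := abs_sub (x j k) (x p q)
      have h3 : |x j k - x p q| ≤ |x j k - L| + |x p q - L| := by
        calc |x j k - x p q| = |(x j k - L) - (x p q - L)| := by ring_nf
          _ ≤ |x j k - L| + |x p q - L| := abs_sub _ _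
      linarith
    rcases hor with h | h
    · exact Or.inl ⟨⟨h, c1, c2, c5, c6⟩, ⟨c3, c4⟩, ⟨c7, c8⟩⟩
    · exact Or.inr ⟨⟨⟨c1, c2⟩, ⟨c5, c6⟩⟩, ⟨h, c3, c4, c7, c8⟩⟩
  have hTcard : T.ncard ≤ 2 * (S.ncard * (m * n)) := by
    calc T.ncard ≤ ((S ×ˢ B) ∪ (B ×ˢ S)).ncard :=
          Set.ncard_le_ncard hTsub (((hSfin.prod hBfin).union (hBfin.prod hSfin)))
      _ ≤ (S ×ˢ B).ncard + (B ×ˢ S).ncard := Set.ncard_union_le _ _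
      _ = S.ncard * (m * n) + (m * n) * S.ncard := by
          rw [my_ncard_sprod hSfin hBfin, my_ncard_sprod hBfin hSfin, hBcard]
      _ = 2 * (S.ncard * (m * n)) := by ring
  rcases Nat.eq_zero_or_pos m with hm | hm
  · subst hm
    simp only [dens2, Nat.cast_zero]
    rw [show ((0:ℝ)^2 * (n:ℝ)^2) = 0 by ring, div_zero]
    have := dens_nonneg A 0 n
    unfold dens at this ⊢
    linarith
  rcases Nat.eq_zero_or_pos n with hn | hn
  · subst hn
    simp only [dens2, Nat.cast_zero]
    rw [show ((m:ℝ)^2 * (0:ℝ)^2) = 0 by ring, div_zero]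
    have := dens_nonneg A m 0
    unfold dens at this ⊢
    linarith
  have hmn : (0:ℝ) < (m : ℝ) * n := by positivity
  unfold dens2 dens
  rw [div_le_iff₀ (by positivity), show (2:ℝ) * ((S.ncard : ℝ) / (m * n)) * ((m:ℝ)^2 * (n:ℝ)^2)
      = 2 * (S.ncard * (m * n)) by field_simp]
  calc (({q ∈ {q : (ℕ × ℕ) × (ℕ × ℕ) | ε ≤ |x q.1.1 q.1.2 - x q.2.1 q.2.2|} |
      1 ≤ q.1.1 ∧ q.1.1 ≤ m ∧ 1 ≤ q.2.1 ∧ q.2.1 ≤ m ∧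
      1 ≤ q.1.2 ∧ q.1.2 ≤ n ∧ 1 ≤ q.2.2 ∧ q.2.2 ≤ n}.ncard : ℝ))
      = (T.ncard : ℝ) := by rw [hT]
    _ ≤ ((2 * (S.ncard * (m * n)) : ℕ) : ℝ) := by exact_mod_cast hTcard
    _ = 2 * ((S.ncard : ℝ) * (m * n)) := by push_cast; ring

/-- Every double sequence of real numbers that is `I`-statistically convergent
to `L` (for a strongly admissible ideal `I` on `ℕ×ℕ`) is `I`-statistically
pre-Cauchy. -/
theorem iStatConv_implies_iStatPreCauchy
    (I : Set (Set (ℕ × ℕ))) (hI : StronglyAdmissible I)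
    (x : ℕ → ℕ → ℝ) (L : ℝ) (hx : IStatConv I x L) :
    IStatPreCauchy I x  := by
  intro ε hε δ hδ
  have h2 : ε/2 > 0 := by linarith
  have hδ2 : δ/2 > 0 := by linarith
  have hmem := hx (ε/2) h2 (δ/2) hδ2
  apply hI.1.2.2 _ _ _ hmem
  intro mn hmn
  simp only [Set.mem_setOf_eq] at hmn ⊢
  have := key_ineq x L ε hε mn.1 mn.2
  linarith
end

section
/- Let (S,𝔉,τ) be a probabilistic metric space with continuous triangle function τ, and let I be a strongly admissible ideal on ℕ×ℕ. Every double sequence in S that is strong I-statistically convergent to some point a ∈ S is strong I-statistically pre-Cauchy. -/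
/-!
Strong closeness `F(s) > 1 - s` to `ε₀` and `d_L(F, ε₀) < s` are interchangeable up to
shrinking `s`, so continuity of `τ` at `(ε₀, ε₀)` together with `F_{yz} ≥ τ(F_{ya}, F_{az})`
yields `s > 0` such that two terms `x_{jk}`, `x_{pq}` that are both `s`-close to `a` are
`t`-close to each other. Hence every bad pair in the `m × n` box has a bad coordinate, there
are at most `2 · mn · #{bad indices}` of them, the pair density is at most twice the index
density, and the ideal is closed under subsets.
-/
open Set

/-- A distance distribution function. -/
structure DDF where
  toFun : ℝ → ℝ
  mono' : Monotone toFun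
  nonneg' : ∀ x, 0 ≤ toFun x
  le_one' : ∀ x, toFun x ≤ 1
  zero' : ∀ x ≤ 0, toFun x = 0
  tendsto_one' : Filter.Tendsto toFun Filter.atTop (nhds 1)
  leftCont' : ∀ x > 0, ContinuousWithinAt toFun (Set.Iio x) x

instance : CoeFun DDF fun _ => ℝ → ℝ := ⟨DDF.toFun⟩

/-- The unit step at 0. -/
noncomputable def eps0 : DDF where
  toFun x := if 0 < x then 1 else 0
  mono' := by
    intro a b hab
    by_cases ha : 0 < a
    · simp [ha, lt_of_lt_of_le ha hab]
    · by_cases hb : 0 < b <;> simp [ha, hb]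
  nonneg' := by intro x; (try dsimp only); split_ifs <;> norm_num
  le_one' := by intro x; (try dsimp only); split_ifs <;> norm_num
  zero' := by intro x hx; simp [not_lt.mpr hx]
  tendsto_one' := by
    have h : (fun _ : ℝ => (1 : ℝ)) =ᶠ[Filter.atTop]
        fun x : ℝ => if 0 < x then (1:ℝ) else 0 := by
      filter_upwards [Filter.eventually_gt_atTop (0:ℝ)] with x hx
      simp [hx]
    exact tendsto_const_nhds.congr' h
  leftCont' := by
    intro x hx
    have h : (fun _ : ℝ => (1 : ℝ)) =ᶠ[nhdsWithin x (Set.Iio x)]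
        fun y : ℝ => if 0 < y then (1:ℝ) else 0 := by
      have hev : ∀ᶠ y in nhds x, (0:ℝ) < y := eventually_gt_nhds hx
      filter_upwards [nhdsWithin_le_nhds hev] with y hy
      simp [hy]
    have : Filter.Tendsto (fun y : ℝ => if 0 < y then (1:ℝ) else 0)
        (nhdsWithin x (Set.Iio x)) (nhds 1) := tendsto_const_nhds.congr' h
    simpa [ContinuousWithinAt, hx] using this

/-- The modified Lévy metric on distance distribution functions. -/
noncomputable def dL (F G : DDF) : ℝ :=
  sInf {h : ℝ | 0 < h ∧ h ≤ 1 ∧ ∀ x : ℝ, 0 < x → x < 1 / h →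
    (F (x - h) - h ≤ G x ∧ G x ≤ F (x + h) + h ∧
     G (x - h) - h ≤ F x ∧ F x ≤ G (x + h) + h)}

/-- A probabilistic metric space under a triangle function. -/
structure PMSpace (S : Type*) where
  F : S → S → DDF
  tri : DDF → DDF → DDF
  F_self : ∀ a, F a a = eps0
  F_ne : ∀ a b, a ≠ b → F a b ≠ eps0
  F_symm : ∀ a b, F a b = F b a
  F_triangle : ∀ a b c, ∀ x : ℝ, (tri (F a b) (F b c)) x ≤ (F a c) x
  tri_comm : ∀ G H, tri G H = tri H G
  tri_assoc : ∀ G H K, tri (tri G H) K = tri G (tri H K)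
  tri_mono : ∀ G G' H, (∀ x, G x ≤ G' x) → ∀ x, (tri G H) x ≤ (tri G' H) x
  tri_id : ∀ G, tri eps0 G = G

/-- Continuity of the triangle function with respect to the Lévy metric. -/
def TriContinuous {S : Type*} (P : PMSpace S) : Prop :=
  ∀ G H : DDF, ∀ ε > 0, ∃ η > 0, ∀ G' H' : DDF,
    dL G G' < η → dL H H' < η → dL (P.tri G H) (P.tri G' H') < ε

variable {S : Type*}

/-- Strong `I`-statistical convergence in a PM space (via strong
`t`-neighbourhoods `N_a(t) = {y : F_{ay}(t) > 1 − t}`). -/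
def StrongIStatConv (I : Set (Set (ℕ × ℕ))) (P : PMSpace S)
    (x : ℕ → ℕ → S) (a : S) : Prop :=
  ∀ t > (0:ℝ), ∀ δ > (0:ℝ),
    {mn : ℕ × ℕ | δ ≤ dens
      {jk : ℕ × ℕ | ¬ (1 - t < (P.F a (x jk.1 jk.2)) t)} mn.1 mn.2} ∈ I

/-- Strong `I`-statistically pre-Cauchy double sequences in a PM space (via
strong `t`-vicinities `𝔘(t) = {(a,b) : F_{ab}(t) > 1 − t}`). -/
def StrongIStatPreCauchy (I : Set (Set (ℕ × ℕ))) (P : PMSpace S)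
    (x : ℕ → ℕ → S) : Prop :=
  ∀ t > (0:ℝ), ∀ δ > (0:ℝ),
    {mn : ℕ × ℕ | δ ≤ dens2
      {q : (ℕ × ℕ) × (ℕ × ℕ) |
        ¬ (1 - t < (P.F (x q.1.1 q.1.2) (x q.2.1 q.2.2)) t)} mn.1 mn.2} ∈ I

lemma eps0_apply_of_pos {x : ℝ} (hx : 0 < x) : eps0 x = 1 := if_pos hx

def levySet (F G : DDF) : Set ℝ :=
  {h : ℝ | 0 < h ∧ h ≤ 1 ∧ ∀ x : ℝ, 0 < x → x < 1 / h →
    (F (x - h) - h ≤ G x ∧ G x ≤ F (x + h) + h ∧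
     G (x - h) - h ≤ F x ∧ F x ≤ G (x + h) + h)}

lemma dL_eq_sInf_levySet (F G : DDF) : dL F G = sInf (levySet F G) := rfl

lemma levySet_bddBelow (F G : DDF) : BddBelow (levySet F G) := ⟨0, fun _ hh => hh.1.le⟩

lemma one_mem_levySet (F G : DDF) : (1 : ℝ) ∈ levySet F G := by
  refine ⟨one_pos, le_rfl, fun x _ _ => ⟨?_, ?_, ?_, ?_⟩⟩
  · linarith [F.le_one' (x - 1), G.nonneg' x]
  · linarith [G.le_one' x, F.nonneg' (x + 1)]
  · linarith [G.le_one' (x - 1), F.nonneg' x]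
  · linarith [F.le_one' x, G.nonneg' (x + 1)]

lemma mem_levySet_eps0 {K : DDF} {s h : ℝ} (hs : 0 < s) (hsh : s < h) (h1 : h ≤ 1)
    (hK : 1 - s < K s) : h ∈ levySet eps0 K := by
  refine ⟨hs.trans hsh, h1, fun x hx _ => ⟨?_, ?_, ?_, ?_⟩⟩
  · rcases le_or_gt x h with hxh | hxh
    · rw [eps0.zero' _ (by linarith)]
      linarith [K.nonneg' x]
    · linarith [eps0.le_one' (x - h), K.mono' (by linarith : s ≤ x)]
  · rw [eps0_apply_of_pos (by linarith)]
    linarith [K.le_one' x]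
  · rw [eps0_apply_of_pos hx]
    linarith [K.le_one' (x - h)]
  · rw [eps0_apply_of_pos hx]
    linarith [K.mono' (by linarith : s ≤ x + h)]

lemma dL_eps0_lt_of_lt_apply {K : DDF} {s η : ℝ} (hs : 0 < s) (hs1 : s < 1) (hsη : s < η)
    (hK : 1 - s < K s) : dL eps0 K < η := by
  have hmem : (s + min η 1) / 2 ∈ levySet eps0 K :=
    mem_levySet_eps0 hs (by linarith [lt_min hsη hs1]) (by linarith [min_le_right η 1]) hK
  rw [dL_eq_sInf_levySet]
  calc sInf (levySet eps0 K) ≤ (s + min η 1) / 2 := csInf_le (levySet_bddBelow _ _) hmem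
    _ < η := by linarith [lt_min hsη hs1, min_le_left η 1]

lemma lt_apply_of_dL_eps0_lt {K : DDF} {t : ℝ} (ht1 : t ≤ 1) (hd : dL eps0 K < t) :
    1 - t < K t := by
  rw [dL_eq_sInf_levySet] at hd
  obtain ⟨h, ⟨hh, -, hcond⟩, hht⟩ :=
    (csInf_lt_iff (levySet_bddBelow eps0 K) ⟨1, one_mem_levySet eps0 K⟩).mp hd
  have ht : 0 < t := hh.trans hht
  have hlt : t < 1 / h := ht1.trans_lt (one_lt_one_div hh (hht.trans_le ht1))
  have := (hcond t ht hlt).1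
  rw [eps0_apply_of_pos (by linarith)] at this
  linarith

theorem TriContinuous.exists_vicinity_comp {P : PMSpace S} (hτ : TriContinuous P) {t : ℝ}
    (ht : 0 < t) : ∃ s > 0, ∀ a y z : S,
      1 - s < P.F a y s → 1 - s < P.F a z s → 1 - t < P.F y z t := by
  obtain ⟨η, hη, hcont⟩ := hτ eps0 eps0 (min t 1) (lt_min ht one_pos)
  obtain ⟨s, hs, hs1, hsη⟩ : ∃ s : ℝ, 0 < s ∧ s < 1 ∧ s < η :=
    ⟨min (η / 2) (1 / 2), by positivity, by linarith [min_le_right (η / 2) (1 / 2)],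
      by linarith [min_le_left (η / 2) (1 / 2)]⟩
  refine ⟨s, hs, fun a y z hy hz => ?_⟩
  have close : ∀ w, 1 - s < P.F a w s → dL eps0 (P.F a w) < η :=
    fun w => dL_eps0_lt_of_lt_apply hs hs1 hsη
  have hd : dL eps0 (P.tri (P.F a y) (P.F a z)) < min t 1 := by
    simpa only [P.tri_id] using hcont _ _ (close y hy) (close z hz)
  calc 1 - t ≤ 1 - min t 1 := by linarith [min_le_left t 1]
    _ < P.tri (P.F a y) (P.F a z) (min t 1) := lt_apply_of_dL_eps0_lt (min_le_right _ _) hd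
    _ ≤ P.F y z (min t 1) := by simpa only [P.F_symm y a] using P.F_triangle y a z _
    _ ≤ P.F y z t := (P.F y z).mono' (min_le_left _ _)

lemma IsIdeal.mem_of_subset {α : Type*} {I : Set (Set α)} (hI : IsIdeal I) {A B : Set α}
    (hBA : B ⊆ A) (hA : A ∈ I) : B ∈ I :=
  hI.2.2 A B hBA hA

lemma ncard_inter_prod_le {α : Type*} {A : Set (α × α)} {G B : Set α} (hB : B.Finite)
    (hAG : ∀ q ∈ A, q.1 ∈ G ∨ q.2 ∈ G) :
    (A ∩ B ×ˢ B).ncard ≤ 2 * (G ∩ B).ncard * B.ncard := by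
  have hsub : A ∩ B ×ˢ B ⊆ (G ∩ B) ×ˢ B ∪ B ×ˢ (G ∩ B) := by
    rintro q ⟨hq, hq1, hq2⟩
    rcases hAG q hq with hg | hg
    · exact Or.inl ⟨⟨hg, hq1⟩, hq2⟩
    · exact Or.inr ⟨hq1, hg, hq2⟩
  have hfin : ((G ∩ B) ×ˢ B ∪ B ×ˢ (G ∩ B)).Finite :=
    ((hB.inter_of_right G).prod hB).union (hB.prod (hB.inter_of_right G))
  calc (A ∩ B ×ˢ B).ncard ≤ ((G ∩ B) ×ˢ B ∪ B ×ˢ (G ∩ B)).ncard := ncard_le_ncard hsub hfin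
    _ ≤ ((G ∩ B) ×ˢ B).ncard + (B ×ˢ (G ∩ B)).ncard := ncard_union_le _ _
    _ = 2 * (G ∩ B).ncard * B.ncard := by rw [ncard_prod, ncard_prod]; ring

lemma dens_eq_ncard_inter_div (G : Set (ℕ × ℕ)) (m n : ℕ) :
    dens G m n = ((G ∩ Icc 1 m ×ˢ Icc 1 n).ncard : ℝ) / (m * n) := by
  unfold dens
  congr 3
  ext jk
  simp only [mem_ofPred_eq, mem_inter_iff, mem_prod, mem_Icc]
  tauto

lemma dens2_eq_ncard_inter_div (A : Set ((ℕ × ℕ) × (ℕ × ℕ))) (m n : ℕ) :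
    dens2 A m n = ((A ∩ (Icc 1 m ×ˢ Icc 1 n) ×ˢ (Icc 1 m ×ˢ Icc 1 n)).ncard : ℝ) /
      ((m : ℝ) * n) ^ 2 := by
  unfold dens2
  rw [mul_pow]
  congr 3
  ext q
  simp only [mem_ofPred_eq, mem_inter_iff, mem_prod, mem_Icc]
  tauto

theorem dens2_le_two_mul_dens {A : Set ((ℕ × ℕ) × (ℕ × ℕ))} {G : Set (ℕ × ℕ)}
    (hAG : ∀ q ∈ A, q.1 ∈ G ∨ q.2 ∈ G) (m n : ℕ) : dens2 A m n ≤ 2 * dens G m n := by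
  set B := Icc 1 m ×ˢ Icc 1 n
  have hB : B.ncard = m * n := by simp only [B, ncard_prod, ncard_Icc_nat, add_tsub_cancel_right]
  have hcount : ((A ∩ B ×ˢ B).ncard : ℝ) ≤ 2 * (G ∩ B).ncard * ((m : ℝ) * n) := by
    exact_mod_cast hB ▸ ncard_inter_prod_le ((finite_Icc 1 m).prod (finite_Icc 1 n)) hAG
  rw [dens2_eq_ncard_inter_div, dens_eq_ncard_inter_div]
  calc ((A ∩ B ×ˢ B).ncard : ℝ) / ((m : ℝ) * n) ^ 2
      ≤ 2 * (G ∩ B).ncard * ((m : ℝ) * n) / ((m : ℝ) * n) ^ 2 := by gcongr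
    _ = 2 * ((G ∩ B).ncard / ((m : ℝ) * n)) := by
      rcases eq_or_ne ((m : ℝ) * n) 0 with h0 | h0
      · simp [h0]
      · field_simp

/-- In a PM space with continuous triangle function, every strong
`I`-statistically convergent double sequence is strong `I`-statistically
pre-Cauchy. -/
theorem strongIStatConv_implies_strongIStatPreCauchy
    (P : PMSpace S) (hτ : TriContinuous P)
    (I : Set (Set (ℕ × ℕ))) (hI : StronglyAdmissible I)
    (x : ℕ → ℕ → S) (a : S) (hx : StrongIStatConv I P x a) :
    StrongIStatPreCauchy I P x := by
  intro t ht δ hδ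
  obtain ⟨s, hs, hcomp⟩ := hτ.exists_vicinity_comp ht
  have hAG : ∀ q ∈ {q : (ℕ × ℕ) × (ℕ × ℕ) |
        ¬ (1 - t < (P.F (x q.1.1 q.1.2) (x q.2.1 q.2.2)) t)},
      q.1 ∈ {jk : ℕ × ℕ | ¬ (1 - s < (P.F a (x jk.1 jk.2)) s)} ∨
        q.2 ∈ {jk : ℕ × ℕ | ¬ (1 - s < (P.F a (x jk.1 jk.2)) s)} :=
    fun q hq => or_iff_not_and_not.mpr fun h =>
    hq (hcomp a _ _ (not_not.mp h.1) (not_not.mp h.2))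
  refine hI.1.mem_of_subset (fun mn hmn => ?_) (hx s hs (δ / 2) (by positivity))
  have := dens2_le_two_mul_dens hAG mn.1 mn.2
  simp only [mem_ofPred_eq] at hmn ⊢
  linarith
end

section
/- Define the real double sequence x_{jk} = Σ_{u=1}^{m} 1/u + Σ_{v=1}^{n} 1/v where m, n are determined by (m−1)! < j ≤ m! and (n−1)! < k ≤ n!. Then x is statistically pre-Cauchy but has no convergent subsequence (in Pringsheim's sense); in particular x is not statistically convergent. -/
open Set

/-- Ordinary (statistical) notions: statistically pre-Cauchy and statistically
convergent double sequences, via Pringsheim limits of the counting ratios. -/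
def StatPreCauchy (x : ℕ → ℕ → ℝ) : Prop :=
  ∀ ε > (0:ℝ), PTendsto (fun m n => dens2
    {q : (ℕ × ℕ) × (ℕ × ℕ) | ε ≤ |x q.1.1 q.1.2 - x q.2.1 q.2.2|} m n) 0

def StatConv (x : ℕ → ℕ → ℝ) (L : ℝ) : Prop :=
  ∀ ε > (0:ℝ), PTendsto (fun m n => dens {jk : ℕ × ℕ | ε ≤ |x jk.1 jk.2 - L|} m n) 0

noncomputable def Hh (m : ℕ) : ℝ := ∑ u ∈ Finset.Icc 1 m, (1:ℝ)/u

lemma Hh_nonneg (m : ℕ) : 0 ≤ Hh m := Finset.sum_nonneg (fun u _ => by positivity)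

lemma Hh_mono : Monotone Hh := by
  intro a b hab
  exact Finset.sum_le_sum_of_subset_of_nonneg (Finset.Icc_subset_Icc_right hab)
    (fun i _ _ => by positivity)

lemma Hh_succ (s : ℕ) : Hh (s+1) = Hh s + 1/((s:ℝ)+1) := by
  unfold Hh
  rw [Finset.sum_Icc_succ_top (by omega)]
  push_cast; ring

lemma Hh_eq_range (m : ℕ) : Hh m = ∑ i ∈ Finset.range m, (1:ℝ)/(i+1) := by
  induction m with
  | zero => simp [Hh]
  | succ n ih => rw [Hh_succ, Finset.sum_range_succ, ih]

lemma Hh_unbounded (C : ℝ) : ∃ M : ℕ, C ≤ Hh M := by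
  obtain ⟨M, hM⟩ := (Real.tendsto_sum_range_one_div_nat_succ_atTop.eventually_ge_atTop C).exists
  exact ⟨M, by rwa [Hh_eq_range]⟩

lemma Hh_close {a b s : ℕ} (hs : 1 ≤ s) (ha1 : s - 1 ≤ a) (ha2 : a ≤ s)
    (hb1 : s - 1 ≤ b) (hb2 : b ≤ s) : |Hh a - Hh b| ≤ 1/(s:ℝ) := by
  obtain ⟨r, rfl⟩ : ∃ r, s = r + 1 := ⟨s-1, by omega⟩
  have e : Hh (r+1) = Hh r + 1/((r:ℝ)+1) := Hh_succ r
  have h1 : Hh r ≤ Hh a := Hh_mono (by omega)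
  have h2 : Hh a ≤ Hh (r+1) := Hh_mono ha2
  have h3 : Hh r ≤ Hh b := Hh_mono (by omega)
  have h4 : Hh b ≤ Hh (r+1) := Hh_mono hb2
  rw [abs_sub_le_iff]; push_cast; constructor <;> linarith

def Gmap (q : (ℕ×ℕ)×(ℕ×ℕ)) : (ℕ×ℕ)×(ℕ×ℕ) := ((q.1.1, q.2.1), (q.1.2, q.2.2))

lemma Gmap_invol : Function.Involutive Gmap := fun _ => rfl

section
variable {t : ℕ → ℕ}
  (ht : ∀ j : ℕ, 2 ≤ j → (Nat.factorial (t j - 1) < j ∧ j ≤ Nat.factorial (t j)))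

include ht

lemma t_gt {j M : ℕ} (h2 : 2 ≤ j) (h : Nat.factorial M < j) : M < t j := by
  have h1 := (ht j h2).2
  by_contra hc
  push_neg at hc
  have := Nat.factorial_le hc
  omega

lemma t_le_t {j m : ℕ} (h2 : 2 ≤ j) (hm : 2 ≤ m) (hjm : j ≤ m) : t j ≤ t m := by
  have h1 := (ht j h2).1
  have h2' := (ht m hm).2
  by_contra hc
  push_neg at hc
  have : Nat.factorial (t m) ≤ Nat.factorial (t j - 1) := Nat.factorial_le (by omega)
  omega

lemma countA {ε δ : ℝ} (hε : 0 < ε) (hδ : 0 < δ) :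
    ∃ M : ℕ, 2 ≤ M ∧ ∀ m : ℕ, M ≤ m →
      (((Finset.Icc 1 m ×ˢ Finset.Icc 1 m).filter
        (fun jp : ℕ × ℕ => ε ≤ |Hh (t jp.1) - Hh (t jp.2)|)).card : ℝ) ≤ δ * (m:ℝ)^2 := by
  obtain ⟨S₀, hS₀⟩ := exists_nat_ge (max (1/ε) (2/δ))
  set S := max S₀ 4 with hSdef
  have hS4 : 4 ≤ S := le_max_right _ _
  have hSε : 1/ε ≤ (S:ℝ) :=
    le_trans (le_trans (le_max_left _ _) hS₀)
      (by exact_mod_cast Nat.cast_le.mpr (le_max_left _ _))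
  have hSδ : 2/δ ≤ (S:ℝ) :=
    le_trans (le_trans (le_max_right _ _) hS₀)
      (by exact_mod_cast Nat.cast_le.mpr (le_max_left _ _))
  refine ⟨S.factorial + 1,
    by have := Nat.one_le_iff_ne_zero.mpr (Nat.factorial_ne_zero S); omega, ?_⟩
  intro m hm
  have hm2 : 2 ≤ m := by
    have := Nat.one_le_iff_ne_zero.mpr (Nat.factorial_ne_zero S); omega
  have hsS : S < t m := t_gt ht hm2 (by omega)
  set s := t m with hs
  have hs5 : 5 ≤ s := by omega
  set K := (s - 2).factorial with hK
  have hK2 : 2 ≤ K := by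
    have h22 : 2 ≤ (s-2) := by omega
    calc 2 = Nat.factorial 2 := rfl
    _ ≤ _ := Nat.factorial_le h22
  have hsub : ((Finset.Icc 1 m ×ˢ Finset.Icc 1 m).filter
        (fun jp : ℕ × ℕ => ε ≤ |Hh (t jp.1) - Hh (t jp.2)|)) ⊆
      (Finset.Icc 1 K ×ˢ Finset.Icc 1 m) ∪ (Finset.Icc 1 m ×ˢ Finset.Icc 1 K) := by
    rintro ⟨j, p⟩ hmem
    simp only [Finset.mem_filter, Finset.mem_product, Finset.mem_Icc] at hmem
    obtain ⟨⟨⟨hj1, hjm⟩, hp1, hpm⟩, hbad⟩ := hmem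
    simp only [Finset.mem_union, Finset.mem_product, Finset.mem_Icc]
    rcases le_or_gt j K with hjK | hjK
    · exact Or.inl ⟨⟨hj1, hjK⟩, hp1, hpm⟩
    rcases le_or_gt p K with hpK | hpK
    · exact Or.inr ⟨⟨hj1, hjm⟩, hp1, hpK⟩
    exfalso
    have h2j : 2 ≤ j := by omega
    have h2p : 2 ≤ p := by omega
    have htj1 : s - 2 < t j := t_gt ht h2j (by omega)
    have htp1 : s - 2 < t p := t_gt ht h2p (by omega)
    have htj2 : t j ≤ s := t_le_t ht h2j hm2 hjm
    have htp2 : t p ≤ s := t_le_t ht h2p hm2 hpm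
    have hclose : |Hh (t j) - Hh (t p)| ≤ 1/(s:ℝ) :=
      Hh_close (by omega) (by omega) htj2 (by omega) htp2
    have hslt : (1:ℝ)/s < ε := by
      have hS0 : (0:ℝ) < S := by positivity
      have hsR : (S:ℝ) < (s:ℝ) := by exact_mod_cast hsS
      rw [div_lt_iff₀ (by positivity)]
      have h1 : 1/ε < (s:ℝ) := lt_of_le_of_lt hSε hsR
      rw [div_lt_iff₀ hε] at h1
      linarith
    linarith
  have hcard : ((Finset.Icc 1 m ×ˢ Finset.Icc 1 m).filter
        (fun jp : ℕ × ℕ => ε ≤ |Hh (t jp.1) - Hh (t jp.2)|)).card ≤ K * m + m * K := by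
    refine le_trans (Finset.card_le_card hsub) (le_trans (Finset.card_union_le _ _) ?_)
    simp [Nat.card_Icc]
  have hfac : (s - 1).factorial = (s - 1) * K := by
    have h1 : s - 1 = (s - 2) + 1 := by omega
    rw [h1, Nat.factorial_succ, hK]
  have hfm : (s-1).factorial < m := by
    have := (ht m hm2).1
    rwa [← hs] at this
  have hδs : 2 ≤ δ * ((s:ℝ) - 1) := by
    have hss : (S:ℝ) ≤ (s:ℝ) - 1 := by
      have : (S:ℝ) + 1 ≤ (s:ℝ) := by exact_mod_cast hsS
      linarith
    rw [div_le_iff₀ hδ] at hSδ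
    nlinarith
  have hKm : 2 * (K:ℝ) ≤ δ * (m:ℝ) := by
    have h1 : ((s-1).factorial : ℝ) ≤ (m:ℝ) := by exact_mod_cast hfm.le
    have h2 : ((s-1).factorial : ℝ) = ((s:ℝ) - 1) * (K:ℝ) := by
      rw [hfac]; push_cast [Nat.cast_sub (by omega : 1 ≤ s)]; ring
    have hK0 : (0:ℝ) < K := by exact_mod_cast (by omega : 0 < K)
    nlinarith
  have hc2 : ((((Finset.Icc 1 m ×ˢ Finset.Icc 1 m).filter
        (fun jp : ℕ × ℕ => ε ≤ |Hh (t jp.1) - Hh (t jp.2)|)).card : ℕ) : ℝ) ≤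
      2 * (K:ℝ) * m := by
    calc _ ≤ ((K * m + m * K : ℕ) : ℝ) := by exact_mod_cast hcard
    _ = 2 * (K:ℝ) * m := by push_cast; ring
  have hm0 : (0:ℝ) ≤ (m:ℝ) := by positivity
  nlinarith

end

/-- The double sequence `x_{jk} = Σ_{u=1}^m 1/u + Σ_{v=1}^n 1/v`, where
`(m−1)! < j ≤ m!` and `(n−1)! < k ≤ n!`, is statistically pre-Cauchy but has no
convergent subsequence in Pringsheim's sense; in particular it is not
statistically convergent. -/
theorem harmonic_factorial_example
    (t : ℕ → ℕ) (x : ℕ → ℕ → ℝ)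
    (ht : ∀ j : ℕ, 2 ≤ j → (Nat.factorial (t j - 1) < j ∧ j ≤ Nat.factorial (t j)))
    (hx : ∀ j k : ℕ, x j k =
      (∑ u ∈ Finset.Icc 1 (t j), (1 : ℝ) / u) + ∑ v ∈ Finset.Icc 1 (t k), (1 : ℝ) / v) :
    StatPreCauchy x ∧
    (¬ ∃ (a : ℝ) (js ks : ℕ → ℕ), StrictMono js ∧ StrictMono ks ∧
        Filter.Tendsto (fun i => x (js i) (ks i)) Filter.atTop (nhds a)) ∧
    (¬ ∃ L : ℝ, StatConv x L) := by
  obtain ⟨M₀pre, _⟩ := Hh_unbounded 0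
  refine ⟨?_, ?_, ?_⟩
  · -- StatPreCauchy
    intro ε hε δ hδ
    obtain ⟨M, hM2, hMc⟩ := countA ht (by linarith : (0:ℝ) < ε/2) (by linarith : (0:ℝ) < δ/4)
    refine ⟨M, ?_⟩
    intro m hm n hn
    set Bm := (Finset.Icc 1 m ×ˢ Finset.Icc 1 m).filter
      (fun jp : ℕ × ℕ => ε/2 ≤ |Hh (t jp.1) - Hh (t jp.2)|) with hBm
    set Bn := (Finset.Icc 1 n ×ˢ Finset.Icc 1 n).filter
      (fun jp : ℕ × ℕ => ε/2 ≤ |Hh (t jp.1) - Hh (t jp.2)|) with hBn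
    set F := (Bm ×ˢ (Finset.Icc 1 n ×ˢ Finset.Icc 1 n)) ∪
      ((Finset.Icc 1 m ×ˢ Finset.Icc 1 m) ×ˢ Bn) with hF
    have hsub : {q ∈ {q : (ℕ × ℕ) × (ℕ × ℕ) | ε ≤ |x q.1.1 q.1.2 - x q.2.1 q.2.2|} |
        1 ≤ q.1.1 ∧ q.1.1 ≤ m ∧ 1 ≤ q.2.1 ∧ q.2.1 ≤ m ∧
        1 ≤ q.1.2 ∧ q.1.2 ≤ n ∧ 1 ≤ q.2.2 ∧ q.2.2 ≤ n} ⊆ Gmap '' (F : Set _) := by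
      rintro ⟨⟨j, k⟩, ⟨p, qq⟩⟩ ⟨hA, hj1, hjm, hp1, hpm, hk1, hkn, hq1, hqn⟩
      refine ⟨((j, p), (k, qq)), ?_, rfl⟩
      have hA' : ε ≤ |(Hh (t j) + Hh (t k)) - (Hh (t p) + Hh (t qq))| := by
        rw [Set.mem_setOf_eq, hx j k, hx p qq] at hA
        exact hA
      have hsplit : ε/2 ≤ |Hh (t j) - Hh (t p)| ∨ ε/2 ≤ |Hh (t k) - Hh (t qq)| := by
        by_contra hno
        push_neg at hno
        obtain ⟨hn1, hn2⟩ := hno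
        have h1 := abs_add_le (Hh (t j) - Hh (t p)) (Hh (t k) - Hh (t qq))
        have h2 : (Hh (t j) + Hh (t k)) - (Hh (t p) + Hh (t qq)) =
            (Hh (t j) - Hh (t p)) + (Hh (t k) - Hh (t qq)) := by ring
        rw [h2] at hA'
        linarith
      rw [Finset.mem_coe, hF, Finset.mem_union]
      rcases hsplit with h | h
      · exact Or.inl (by
          rw [Finset.mem_product, hBm, Finset.mem_filter, Finset.mem_product,
            Finset.mem_product]
          simp only [Finset.mem_Icc]
          exact ⟨⟨⟨⟨hj1, hjm⟩, hp1, hpm⟩, h⟩, ⟨hk1, hkn⟩, hq1, hqn⟩)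
      · exact Or.inr (by
          rw [Finset.mem_product, hBn, Finset.mem_filter, Finset.mem_product,
            Finset.mem_product]
          simp only [Finset.mem_Icc]
          exact ⟨⟨⟨hj1, hjm⟩, hp1, hpm⟩, ⟨⟨hk1, hkn⟩, hq1, hqn⟩, h⟩)
    have hncard : ({q ∈ {q : (ℕ × ℕ) × (ℕ × ℕ) | ε ≤ |x q.1.1 q.1.2 - x q.2.1 q.2.2|} |
        1 ≤ q.1.1 ∧ q.1.1 ≤ m ∧ 1 ≤ q.2.1 ∧ q.2.1 ≤ m ∧
        1 ≤ q.1.2 ∧ q.1.2 ≤ n ∧ 1 ≤ q.2.2 ∧ q.2.2 ≤ n}).ncard ≤ F.card := by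
      have hfin : ((Gmap '' (F : Set _))).Finite := F.finite_toSet.image _
      have h1 := Set.ncard_le_ncard hsub hfin
      rwa [Set.ncard_image_of_injective _ Gmap_invol.injective, Set.ncard_coe_finset] at h1
    have hFcard : F.card ≤ Bm.card * (n * n) + (m * m) * Bn.card := by
      refine le_trans (Finset.card_union_le _ _) ?_
      simp [Finset.card_product, Nat.card_Icc]
    have hbm := hMc m hm
    have hbn := hMc n hn
    rw [← hBm] at hbm
    rw [← hBn] at hbn
    have hm1 : 1 ≤ m := by omega
    have hn1 : 1 ≤ n := by omega
    have hden : (0:ℝ) < (m:ℝ)^2 * (n:ℝ)^2 := by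
      have h1 : (0:ℝ) < (m:ℝ) := by exact_mod_cast (by omega : 0 < m)
      have h2 : (0:ℝ) < (n:ℝ) := by exact_mod_cast (by omega : 0 < n)
      positivity
    simp only [sub_zero]
    rw [abs_of_nonneg (by unfold dens2; positivity)]
    unfold dens2
    rw [div_lt_iff₀ hden]
    refine lt_of_le_of_lt ((Nat.cast_le (α := ℝ)).mpr hncard) ?_
    have c2 : ((F.card : ℕ) : ℝ) ≤ (Bm.card : ℝ) * ((n:ℝ) * (n:ℝ)) +
        ((m:ℝ) * (m:ℝ)) * (Bn.card : ℝ) := by exact_mod_cast hFcard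
    have d1 : (Bm.card : ℝ) * ((n:ℝ) * (n:ℝ)) ≤ (δ/4 * (m:ℝ)^2) * ((n:ℝ) * (n:ℝ)) :=
      mul_le_mul_of_nonneg_right hbm (by positivity)
    have d2 : ((m:ℝ) * (m:ℝ)) * (Bn.card : ℝ) ≤ ((m:ℝ) * (m:ℝ)) * (δ/4 * (n:ℝ)^2) :=
      mul_le_mul_of_nonneg_left hbn (by positivity)
    nlinarith
  · -- no convergent subsequence
    rintro ⟨a, js, ks, hjs, hks, hconv⟩
    obtain ⟨M₀, hM₀⟩ := Hh_unbounded (a + 1)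
    have hev : ∀ᶠ i in Filter.atTop, x (js i) (ks i) < a + 1 :=
      hconv.eventually_lt_const (lt_add_one a)
    obtain ⟨N, hN⟩ := Filter.eventually_atTop.mp hev
    set i := max N (Nat.factorial M₀ + 2) with hi
    have hiN : N ≤ i := le_max_left _ _
    have hle : i ≤ js i := hjs.le_apply
    have hji : Nat.factorial M₀ < js i := by omega
    have h2j : 2 ≤ js i := by
      have h1 : 1 ≤ Nat.factorial M₀ := Nat.one_le_iff_ne_zero.mpr (Nat.factorial_ne_zero M₀)
      omega
    have htj : M₀ < t (js i) := t_gt ht h2j hji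
    have hlow : a + 1 ≤ x (js i) (ks i) := by
      have hx0 : x (js i) (ks i) = Hh (t (js i)) + Hh (t (ks i)) := hx _ _
      have h1 := Hh_mono htj.le
      have h2 := Hh_nonneg (t (ks i))
      linarith
    exact absurd (hN i hiN) (not_lt.mpr hlow)
  · -- not statistically convergent
    rintro ⟨L, hL⟩
    obtain ⟨M₀, hM₀⟩ := Hh_unbounded (L + 1)
    set N0 := max (Nat.factorial M₀) 2 with hN0
    obtain ⟨N, hN⟩ := hL 1 one_pos (1/2) (by norm_num)
    set m := max N (4 * N0) with hmdef
    have hmN : N ≤ m := le_max_left _ _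
    have h4 : 4 * N0 ≤ m := le_max_right _ _
    have hkey := hN m hmN m hmN
    simp only [sub_zero] at hkey
    have hsubset : (↑(Finset.Ioc N0 m ×ˢ Finset.Ioc N0 m) : Set (ℕ×ℕ)) ⊆
        {jk ∈ {jk : ℕ × ℕ | 1 ≤ |x jk.1 jk.2 - L|} |
          1 ≤ jk.1 ∧ jk.1 ≤ m ∧ 1 ≤ jk.2 ∧ jk.2 ≤ m} := by
      rintro ⟨j, k⟩ hjk
      rw [Finset.mem_coe, Finset.mem_product] at hjk
      rw [Finset.mem_Ioc, Finset.mem_Ioc] at hjk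
      obtain ⟨⟨hj1, hj2⟩, hk1, hk2⟩ := hjk
      have h2j : 2 ≤ j := by omega
      have htj : M₀ < t j := t_gt ht h2j (by omega)
      have hx0 : x j k = Hh (t j) + Hh (t k) := hx _ _
      have h1 := Hh_mono htj.le
      have h2 := Hh_nonneg (t k)
      have hxl : 1 ≤ x j k - L := by linarith
      refine ⟨le_trans hxl (le_abs_self _), by omega, by omega, by omega, by omega⟩
    have hfinS : ({jk ∈ {jk : ℕ × ℕ | 1 ≤ |x jk.1 jk.2 - L|} |
        1 ≤ jk.1 ∧ jk.1 ≤ m ∧ 1 ≤ jk.2 ∧ jk.2 ≤ m}).Finite := by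
      refine Set.Finite.subset (Finset.Icc 1 m ×ˢ Finset.Icc 1 m).finite_toSet ?_
      rintro ⟨j, k⟩ ⟨_, h1, h2, h3, h4⟩
      simp only [Finset.mem_coe, Finset.mem_product, Finset.mem_Icc]
      omega
    have hlow : (m - N0) * (m - N0) ≤ ({jk ∈ {jk : ℕ × ℕ | 1 ≤ |x jk.1 jk.2 - L|} |
        1 ≤ jk.1 ∧ jk.1 ≤ m ∧ 1 ≤ jk.2 ∧ jk.2 ≤ m}).ncard := by
      have h := Set.ncard_le_ncard hsubset hfinS
      rwa [Set.ncard_coe_finset, Finset.card_product, Nat.card_Ioc] at h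
    have hN02 : 2 ≤ N0 := le_max_right _ _
    have hm8 : 8 ≤ m := by omega
    have hm0 : (0:ℝ) < (m:ℝ) := by exact_mod_cast (by omega : 0 < m)
    have hcast : ((m - N0 : ℕ) : ℝ) = (m:ℝ) - (N0:ℝ) := by
      have hle : N0 ≤ m := by omega
      push_cast [hle]; ring
    have hball : (3/4 : ℝ) * (m:ℝ) ≤ (m:ℝ) - (N0:ℝ) := by
      have h44 : (4:ℝ) * (N0:ℝ) ≤ (m:ℝ) := by exact_mod_cast h4
      linarith
    have hdge : (9/16 : ℝ) ≤ dens {jk : ℕ × ℕ | 1 ≤ |x jk.1 jk.2 - L|} m m := by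
      unfold dens
      rw [le_div_iff₀ (by positivity)]
      have hnl : (((m - N0) * (m - N0) : ℕ) : ℝ) ≤
          (({jk ∈ {jk : ℕ × ℕ | 1 ≤ |x jk.1 jk.2 - L|} |
            1 ≤ jk.1 ∧ jk.1 ≤ m ∧ 1 ≤ jk.2 ∧ jk.2 ≤ m}).ncard : ℝ) := by exact_mod_cast hlow
      push_cast [hcast] at hnl
      nlinarith
    rw [abs_of_nonneg (by unfold dens; positivity)] at hkey
    linarith
end
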